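/- Let V be an (n+1)-dimensional vector space over a field F of characteristic ≠ 2 with a nondegenerate symmetric bilinear form f, n ≥ 1. Then the pregeometry on proper nondegenerate subspaces of V (with symmetrized containment as incidence and vector-space dimension as type) is a geometry: every flag of pairwise-incident nondegenerate proper subspaces extends to a maximal flag containing one nondegenerate subspace of each dimension 1, ..., n. -/

import Mathlib

/-!
If `U < W` are nondegenerate subspaces, the relative orthogonal complement `U^⊥ ∩ W` is
nondegenerate and nonzero, so in characteristic `≠ 2` it contains an anisotropic vector `v`, and
`U ⊕ ⟨v⟩` is a nondegenerate subspace of dimension `dim U + 1` between `U` and `W`, being an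
orthogonal sum of nondegenerate subspaces. After adding `0` and `V` to the flag, inserting such a
subspace between the member of dimension `k` and the next member above it, for `k = 0, 1, …`,
fills in every dimension.
-/

open Module Submodule

section Chain

variable {F V : Type*} [Field F] [AddCommGroup V] [Module F V] [FiniteDimensional F V]
  {S : Set (Submodule F V)}

theorem IsChain.le_of_finrank_le (hS : IsChain (· ≤ ·) S) {U W : Submodule F V} (hU : U ∈ S)
    (hW : W ∈ S) (h : finrank F U ≤ finrank F W) : U ≤ W :=
  (hS.total hU hW).elim id fun hWU => (eq_of_le_of_finrank_le hWU h).ge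

theorem IsChain.eq_of_finrank_eq (hS : IsChain (· ≤ ·) S) {U W : Submodule F V} (hU : U ∈ S)
    (hW : W ∈ S) (h : finrank F U = finrank F W) : U = W :=
  le_antisymm (hS.le_of_finrank_le hU hW h.le) (hS.le_of_finrank_le hW hU h.ge)

end Chain

namespace LinearMap.BilinForm

variable {F V : Type*} [Field F] [AddCommGroup V] [Module F V] {B : LinearMap.BilinForm F V}

theorem exists_mem_apply_self_ne_zero (h2 : (2 : F) ≠ 0) (hB : B.IsSymm) {P : Submodule F V}
    (hP : (B.restrict P).Nondegenerate) (hP₀ : P ≠ ⊥) : ∃ v ∈ P, B v v ≠ 0 := by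
  have : Invertible (2 : F) := invertibleOfNonzero h2
  have hne : B.restrict P ≠ 0 := by
    intro h
    obtain ⟨x, hx, hx₀⟩ := exists_mem_ne_zero_of_ne_bot hP₀
    exact hx₀ (congrArg Subtype.val (hP.1 ⟨x, hx⟩ fun y => by simp [h]))
  obtain ⟨v, hv⟩ := exists_bilinForm_self_ne_zero hne (isSymm_iff.1 (hB.restrict P))
  exact ⟨v, v.2, hv⟩

variable [FiniteDimensional F V]

theorem restrict_nondegenerate_iff (U : Submodule F V) :
    (B.restrict U).Nondegenerate ↔ ∀ x ∈ U, (∀ y ∈ U, B x y = 0) → x = 0 := by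
  refine ⟨fun h x hx hxU => ?_, fun h => .ofSeparatingLeft fun x hx => ?_⟩
  · simpa using h.1 ⟨x, hx⟩ fun y => by simpa using hxU y y.2
  · exact Subtype.ext (h x x.2 fun y hy => by simpa using hx ⟨y, hy⟩)

theorem restrict_nondegenerate_top (hB : B.Nondegenerate) :
    (B.restrict (⊤ : Submodule F V)).Nondegenerate :=
  (restrict_nondegenerate_iff ⊤).2 fun x _ hx => hB.1 x fun y => hx y trivial

theorem restrict_nondegenerate_bot : (B.restrict (⊥ : Submodule F V)).Nondegenerate :=
  (restrict_nondegenerate_iff ⊥).2 fun _ hx _ => (mem_bot F).1 hx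

theorem restrict_sup_nondegenerate (hB : B.IsRefl) {U P : Submodule F V}
    (hU : (B.restrict U).Nondegenerate) (hP : (B.restrict P).Nondegenerate)
    (hPU : P ≤ B.orthogonal U) : (B.restrict (U ⊔ P)).Nondegenerate := by
  rw [restrict_nondegenerate_iff] at hU hP ⊢
  intro x hx hxUP
  obtain ⟨u, hu, p, hp, rfl⟩ := mem_sup.1 hx
  have hu₀ : u = 0 := hU u hu fun y hy => by
    simpa [hB _ _ (hPU hp y hy)] using hxUP y (mem_sup_left hy)
  have hp₀ : p = 0 := hP p hp fun y hy => by
    simpa [hPU hy u hu] using hxUP y (mem_sup_right hy)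
  simp [hu₀, hp₀]

theorem sup_orthogonal_inf_eq (hB : B.IsRefl) {U W : Submodule F V} (hUW : U ≤ W)
    (hU : (B.restrict U).Nondegenerate) : U ⊔ B.orthogonal U ⊓ W = W := by
  rw [← sup_inf_assoc_of_le _ hUW,
    (isCompl_orthogonal_of_restrict_nondegenerate hB hU).sup_eq_top, top_inf_eq]

theorem restrict_orthogonal_inf_nondegenerate (hB : B.IsRefl) {U W : Submodule F V}
    (hUW : U ≤ W) (hU : (B.restrict U).Nondegenerate) (hW : (B.restrict W).Nondegenerate) :
    (B.restrict (B.orthogonal U ⊓ W)).Nondegenerate := by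
  rw [restrict_nondegenerate_iff] at hW ⊢
  intro x hx hxO
  refine hW x hx.2 fun y hy => ?_
  rw [← sup_orthogonal_inf_eq hB hUW hU] at hy
  obtain ⟨u, hu, o, ho, rfl⟩ := mem_sup.1 hy
  rw [map_add, hB _ _ (hx.1 u hu), hxO o ho, add_zero]

theorem exists_restrict_nondegenerate_finrank_succ (h2 : (2 : F) ≠ 0) (hB : B.IsSymm)
    {U W : Submodule F V} (hUW : U ≤ W) (hU : (B.restrict U).Nondegenerate)
    (hW : (B.restrict W).Nondegenerate) (hlt : finrank F U < finrank F W) :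
    ∃ U', U ≤ U' ∧ U' ≤ W ∧ (B.restrict U').Nondegenerate ∧ finrank F U' = finrank F U + 1 := by
  have hO₀ : B.orthogonal U ⊓ W ≠ ⊥ := by
    intro h
    have hUW' := sup_orthogonal_inf_eq hB.isRefl hUW hU
    rw [h, sup_bot_eq] at hUW'
    exact hlt.ne (by rw [hUW'])
  obtain ⟨v, hv, hvv⟩ := exists_mem_apply_self_ne_zero h2 hB
    (restrict_orthogonal_inf_nondegenerate hB.isRefl hUW hU hW) hO₀
  have hvU : F ∙ v ≤ B.orthogonal U := (span_singleton_le_iff_mem _ _).2 hv.1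
  have hdisj : Disjoint U (F ∙ v) :=
    (isCompl_orthogonal_of_restrict_nondegenerate hB.isRefl hU).disjoint.mono_right hvU
  have hv_nd : (B.restrict (F ∙ v)).Nondegenerate :=
    B.nondegenerate_restrict_of_disjoint_orthogonal hB.isRefl
      (disjoint_iff.2 (span_singleton_inf_orthogonal_eq_bot hvv))
  refine ⟨U ⊔ F ∙ v, le_sup_left, sup_le hUW ((span_singleton_le_iff_mem _ _).2 hv.2),
    restrict_sup_nondegenerate hB.isRefl hU hv_nd hvU, ?_⟩
  rw [← finrank_span_singleton (K := F) (ne_zero_of_not_isOrtho_self v hvv),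
    ← finrank_sup_add_finrank_inf_eq, hdisj.eq_bot, finrank_bot, add_zero]

def IsNondegenerateChain (B : LinearMap.BilinForm F V) (T : Set (Submodule F V)) : Prop :=
  IsChain (· ≤ ·) T ∧ ∀ U ∈ T, (B.restrict U).Nondegenerate

namespace IsNondegenerateChain

variable {T : Set (Submodule F V)}

theorem insert_bot_insert_top (hB : B.Nondegenerate) (hT : B.IsNondegenerateChain T) :
    B.IsNondegenerateChain (insert ⊥ (insert ⊤ T)) := by
  refine ⟨(hT.1.insert fun _ _ _ => .inr le_top).insert fun _ _ _ => .inl bot_le, ?_⟩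
  rintro U (rfl | rfl | hU)
  exacts [restrict_nondegenerate_bot, restrict_nondegenerate_top hB, hT.2 U hU]

theorem exists_insert_finrank_succ (h2 : (2 : F) ≠ 0) (hB : B.IsSymm)
    (hT : B.IsNondegenerateChain T) (htop : ⊤ ∈ T) {X : Submodule F V} (hX : X ∈ T)
    (hlt : finrank F X < finrank F V) :
    ∃ X' : Submodule F V,
      finrank F X' = finrank F X + 1 ∧ B.IsNondegenerateChain (insert X' T) := by
  -- `W` is the member of `T` of least dimension above `X`
  obtain ⟨W, ⟨hW, hXW⟩, hW_min⟩ := (measure fun W : Submodule F V => finrank F W).wf.has_min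
    {W | W ∈ T ∧ finrank F X < finrank F W} ⟨⊤, htop, by rwa [finrank_top]⟩
  obtain ⟨X', hXX', hX'W, hX', hX'_finrank⟩ := exists_restrict_nondegenerate_finrank_succ h2 hB
    (hT.1.le_of_finrank_le hX hW hXW.le) (hT.2 X hX) (hT.2 W hW) hXW
  refine ⟨X', hX'_finrank, hT.1.insert fun Y hY _ => ?_, ?_⟩
  · rcases le_or_gt (finrank F Y) (finrank F X) with h | h
    · exact .inr ((hT.1.le_of_finrank_le hY hX h).trans hXX')
    · exact .inl (hX'W.trans (hT.1.le_of_finrank_le hW hY (not_lt.1 (hW_min Y ⟨hY, h⟩))))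
  · rintro Y (rfl | hY)
    exacts [hX', hT.2 Y hY]

theorem exists_superset_forall_finrank (h2 : (2 : F) ≠ 0) (hB : B.IsSymm)
    (hT : B.IsNondegenerateChain T) (hbot : ⊥ ∈ T) (htop : ⊤ ∈ T) :
    ∃ T' ⊇ T, B.IsNondegenerateChain T' ∧ ∀ k ≤ finrank F V, ∃ X ∈ T', finrank F X = k := by
  suffices ∀ k ≤ finrank F V, ∃ T' ⊇ T, B.IsNondegenerateChain T' ∧
      ∀ j ≤ k, ∃ X ∈ T', finrank F X = j from this _ le_rfl
  intro k hk
  induction k with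
  | zero => exact ⟨T, subset_rfl, hT, fun j hj => ⟨⊥, hbot, by simp [Nat.le_zero.1 hj]⟩⟩
  | succ k ih =>
    obtain ⟨T', hTT', hT', hT'_finrank⟩ := ih (by omega)
    obtain ⟨X, hX, hXk⟩ := hT'_finrank k le_rfl
    obtain ⟨X', hX', hT''⟩ := hT'.exists_insert_finrank_succ h2 hB (hTT' htop) hX (by omega)
    refine ⟨insert X' T', hTT'.trans (Set.subset_insert _ _), hT'', fun j hj => ?_⟩
    rcases Nat.le_succ_iff.1 hj with hj | rfl
    · obtain ⟨Y, hY, rfl⟩ := hT'_finrank j hj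
      exact ⟨Y, Set.mem_insert_of_mem _ hY, rfl⟩
    · exact ⟨X', Set.mem_insert _ _, by omega⟩

end IsNondegenerateChain

end LinearMap.BilinForm

theorem orthogonal_pregeometry_isGeometry
    {F V : Type*} [Field F] [AddCommGroup V] [Module F V]
    (h2 : (2 : F) ≠ 0) (n : ℕ) (hdim : finrank F V = n + 1)
    (B : LinearMap.BilinForm F V) (hsymm : B.IsSymm) (hB : B.Nondegenerate)
    (S : Set (Submodule F V)) (hchain : IsChain (· ≤ ·) S)
    (hS : ∀ U ∈ S, (B.restrict U).Nondegenerate ∧ U ≠ ⊥ ∧ U ≠ ⊤) :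
    ∃ C : Fin n → Submodule F V, Monotone C ∧
      (∀ k : Fin n, (B.restrict (C k)).Nondegenerate ∧ finrank F (C k) = (k : ℕ) + 1) ∧
      S ⊆ Set.range C := by
  have : FiniteDimensional F V := .of_finrank_pos (by omega)
  have hS' : B.IsNondegenerateChain S := ⟨hchain, fun U hU => (hS U hU).1⟩
  obtain ⟨T, hST, hT, hT_finrank⟩ := (hS'.insert_bot_insert_top hB).exists_superset_forall_finrank
    h2 hsymm (Set.mem_insert _ _) (Set.mem_insert_of_mem _ (Set.mem_insert _ _))
  choose C hCT hC using fun k : Fin n => hT_finrank (k + 1) (by omega)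
  refine ⟨C, fun i j hij => hT.1.le_of_finrank_le (hCT i) (hCT j) (by simpa [hC] using hij),
    fun k => ⟨hT.2 _ (hCT k), hC k⟩, fun U hU => ?_⟩
  have hU₀ : 1 ≤ finrank F U := one_le_finrank_iff.2 (hS U hU).2.1
  have hUn : finrank F U < n + 1 := hdim ▸ finrank_lt (hS U hU).2.2
  have hUT : U ∈ T := hST (Set.mem_insert_of_mem _ (Set.mem_insert_of_mem _ hU))
  exact ⟨⟨finrank F U - 1, by omega⟩,
    hT.1.eq_of_finrank_eq (hCT _) hUT (by rw [hC, Fin.val_mk]; omega)⟩
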